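/- arXiv:2103.10359 — 6 statements merged into one kernel-verified Lean document; each statement's English description precedes it below -/
import Mathlib

section
/- Let H be the contraction hierarchy obtained from G by contracting vertices in a nested dissection order induced by a separator decomposition T (when a vertex is contracted, shortcut edges are added between all pairs of its remaining higher-ranked neighbors). Let X be a node of T and let u be the highest-ranked vertex in G_X. Then the boundary B(X) of G_X equals N_H^↑(u), the set of neighbors of u in H with rank higher than u. -/
/-!
Every vertex of the postorder below `X` precedes the bags of the proper ancestors of `X`, and the
separator property forbids `G`-edges between the subtrees of two siblings. Hence a `G`-edge leaving
`G_X` ends in a bag of a proper ancestor, so it ends above `u`. A boundary vertex `w` is then joined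
to `u` through `G_X`, whose vertices other than `u` lie below `u`, giving the shortcut `u w`.
Conversely, a witness path for the shortcut `u w` leaves `G_X` along some edge; that edge ends above
`u`, so it cannot end at an internal vertex of the path and must end at `w`.
-/

/-- `anc parent Z X`: node `X` is a (weak) ancestor of node `Z`. -/
def anc {ι : Type*} (parent : ι → ι) : ι → ι → Prop :=
  Relation.ReflTransGen (fun a b => parent a = b)

/-- Vertex set of the subgraph `G_X` induced by the subtree rooted at `X`. -/
def subVerts {V ι : Type*} (parent : ι → ι) (bag : ι → Set V) (X : ι) : Set V :=
  {v | ∃ Z, anc parent Z X ∧ v ∈ bag Z}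

section Tree

variable {V ι : Type*} {parent : ι → ι} {bag : ι → Set V}

lemma subVerts_mono {X Y : ι} (h : anc parent X Y) :
    subVerts parent bag X ⊆ subVerts parent bag Y := by
  rintro v ⟨Z, hZ, hv⟩
  exact ⟨Z, hZ.trans h, hv⟩

lemma exists_siblings_of_not_anc {X Z R : ι} (hX : anc parent X R) (hZ : anc parent Z R)
    (hZX : ¬ anc parent Z X) (hXZ : ¬ anc parent X Z) :
    ∃ Y₁ Y₂, parent Y₁ = parent Y₂ ∧ Y₁ ≠ Y₂ ∧ anc parent X Y₁ ∧ anc parent Z Y₂ := by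
  induction hZ using Relation.ReflTransGen.head_induction_on with
  | refl => exact absurd hX hXZ
  | @head Z Z' hstep _ ih =>
    have hZZ' : anc parent Z Z' := Relation.ReflTransGen.single hstep
    by_cases hXZ' : anc parent X Z'
    · -- `Z'` is the lowest common ancestor; its child on the way to `X` is a sibling of `Z`
      rcases hXZ'.cases_tail with rfl | ⟨Y, hXY, hYZ'⟩
      · exact absurd hZZ' hZX
      · refine ⟨Y, Z, hYZ'.trans hstep.symm, ?_, hXY, Relation.ReflTransGen.refl⟩
        rintro rfl
        exact hXZ hXY
    · obtain ⟨Y₁, Y₂, hsib, hne, hXY₁, hZ'Y₂⟩ := ih (fun h => hZX (hZZ'.trans h)) hXZ'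
      exact ⟨Y₁, Y₂, hsib, hne, hXY₁, hZZ'.trans hZ'Y₂⟩

lemma exists_proper_anc_mem_bag_of_adj {G : SimpleGraph V} {root X : ι}
    (hroot : ∀ Z, anc parent Z root) (hcover : ∀ v : V, ∃ Z, v ∈ bag Z)
    (hsep : ∀ Z Y₁ Y₂, parent Y₁ = Z → parent Y₂ = Z → Y₁ ≠ Y₂ →
      ∀ a ∈ subVerts parent bag Y₁, ∀ b ∈ subVerts parent bag Y₂, ¬ G.Adj a b)
    {a b : V} (ha : a ∈ subVerts parent bag X) (hb : b ∉ subVerts parent bag X)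
    (hab : G.Adj a b) :
    ∃ Z, anc parent X Z ∧ X ≠ Z ∧ b ∈ bag Z := by
  obtain ⟨Z, hbZ⟩ := hcover b
  have hbsub : b ∈ subVerts parent bag Z := ⟨Z, Relation.ReflTransGen.refl, hbZ⟩
  have hZX : ¬ anc parent Z X := fun h => hb (subVerts_mono h hbsub)
  by_cases hXZ : anc parent X Z
  · exact ⟨Z, hXZ, fun h => hZX (h ▸ Relation.ReflTransGen.refl), hbZ⟩
  · obtain ⟨Y₁, Y₂, hsib, hne, hXY₁, hZY₂⟩ :=
      exists_siblings_of_not_anc (hroot X) (hroot Z) hZX hXZ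
    exact absurd hab (hsep _ Y₁ Y₂ rfl hsib.symm hne a (subVerts_mono hXY₁ ha)
      b (subVerts_mono hZY₂ hbsub))

end Tree

lemma SimpleGraph.Walk.exists_adj_of_forall_rank_le {V : Type*} {G : SimpleGraph V}
    {S : Set V} {rank : V → ℕ} {r : ℕ}
    (hcross : ∀ a ∈ S, ∀ b ∉ S, G.Adj a b → r < rank b)
    {a w : V} (p : G.Walk a w) (ha : a ∈ S) (hw : w ∉ S)
    (hp : ∀ x ∈ p.support, x ∉ S → x ≠ w → rank x ≤ r) :
    ∃ v ∈ S, G.Adj v w := by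
  obtain ⟨d, hd, hfst, hsnd⟩ := p.exists_boundary_dart S ha hw
  have hlt : r < rank d.snd := hcross _ hfst _ hsnd d.adj
  obtain rfl : d.snd = w := by
    by_contra hne
    exact absurd (hp _ (p.dart_snd_mem_support_of_mem_darts hd) hsnd hne) (by omega)
  exact ⟨d.fst, hfst, d.adj⟩

theorem stmt2_general {V ι : Type*} (G H : SimpleGraph V) (parent : ι → ι) (bag : ι → Set V)
    (root : ι) (rank : V → ℕ)
    (hroot : ∀ Z, anc parent Z root)
    (hcover : ∀ v : V, ∃ Z, v ∈ bag Z)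
    -- separator property: each node separates the subtrees of its distinct children
    (hsep : ∀ Z Y₁ Y₂, parent Y₁ = Z → parent Y₂ = Z → Y₁ ≠ Y₂ →
      ∀ a ∈ subVerts parent bag Y₁, ∀ b ∈ subVerts parent bag Y₂, ¬ G.Adj a b)
    -- postorder numbering property
    (hpost : ∀ X Z, anc parent X Z → X ≠ Z →
      ∀ v ∈ subVerts parent bag X, ∀ w ∈ bag Z, rank v < rank w)
    -- characterization of the contraction hierarchy `H` built from `G` by rank:
    -- `(a,b)` with `rank a < rank b` is an edge of `H` iff there is an `a`–`b` path
    -- in `G` all of whose internal vertices have rank lower than `rank a`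
    (hH : ∀ a b : V, rank a < rank b →
      (H.Adj a b ↔ ∃ p : G.Walk a b, ∀ x ∈ p.support, x ≠ a → x ≠ b → rank x < rank a))
    (X : ι) (u : V)
    (hu : u ∈ subVerts parent bag X)
    (humax : ∀ v ∈ subVerts parent bag X, v ≠ u → rank v < rank u)
    -- `G_X` is connected
    (hconn : ∀ v ∈ subVerts parent bag X,
      ∃ p : G.Walk v u, ∀ x ∈ p.support, x ∈ subVerts parent bag X) :
    {w | w ∉ subVerts parent bag X ∧ ∃ v ∈ subVerts parent bag X, G.Adj v w}
      = {w | H.Adj u w ∧ rank u < rank w} := by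
  set S := subVerts parent bag X
  have hcross : ∀ a ∈ S, ∀ b ∉ S, G.Adj a b → rank u < rank b := by
    intro a ha b hb hab
    obtain ⟨Z, hXZ, hne, hbZ⟩ := exists_proper_anc_mem_bag_of_adj hroot hcover hsep ha hb hab
    exact hpost X Z hXZ hne u hu b hbZ
  ext w
  constructor
  · rintro ⟨hw, v, hv, hvw⟩
    have hlt := hcross v hv w hw hvw
    obtain ⟨p, hp⟩ := hconn v hv
    refine ⟨(hH u w hlt).mpr ⟨p.reverse.concat hvw, fun x hx hxu hxw => ?_⟩, hlt⟩
    simp only [SimpleGraph.Walk.support_concat, SimpleGraph.Walk.support_reverse,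
      List.mem_append, List.mem_reverse, List.mem_singleton] at hx
    exact humax x (hp x (hx.resolve_right hxw)) hxu
  · rintro ⟨hadj, hlt⟩
    obtain ⟨p, hp⟩ := (hH u w hlt).mp hadj
    have hw : w ∉ S := fun hwS => by
      have := humax w hwS (by rintro rfl; omega)
      omega
    refine ⟨hw, p.exists_adj_of_forall_rank_le hcross hu hw fun x hx hxS hxw => ?_⟩
    exact (hp x hx (by rintro rfl; exact hxS hu) hxw).le

/-- Let `H` be the contraction hierarchy obtained by contracting the
vertices of `G` in a nested dissection order induced by a separator decomposition.
For a node `X`, the boundary `B(X)` of `G_X` equals `N_H^↑(u)`, the set of higher-ranked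
`H`-neighbors of the highest-ranked vertex `u` of `G_X`. -/
theorem stmt2 {V ι : Type*} (G H : SimpleGraph V) (parent : ι → ι) (bag : ι → Set V)
    (root : ι) (rank : V → ℕ) (hrank : Function.Injective rank)
    (hroot : ∀ Z, anc parent Z root)
    (hantisymm : ∀ Y Z, anc parent Y Z → anc parent Z Y → Y = Z)
    (hdisj : ∀ Y Z, Y ≠ Z → Disjoint (bag Y) (bag Z))
    (hcover : ∀ v : V, ∃ Z, v ∈ bag Z)
    -- separator property: each node separates the subtrees of its distinct children
    (hsep : ∀ Z Y₁ Y₂, parent Y₁ = Z → parent Y₂ = Z → Y₁ ≠ Y₂ →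
      ∀ a ∈ subVerts parent bag Y₁, ∀ b ∈ subVerts parent bag Y₂, ¬ G.Adj a b)
    -- postorder numbering property
    (hpost : ∀ X Z, anc parent X Z → X ≠ Z →
      ∀ v ∈ subVerts parent bag X, ∀ w ∈ bag Z, rank v < rank w)
    -- characterization of the contraction hierarchy `H` built from `G` by rank:
    -- `(a,b)` with `rank a < rank b` is an edge of `H` iff there is an `a`–`b` path
    -- in `G` all of whose internal vertices have rank lower than `rank a`
    (hH : ∀ a b : V, rank a < rank b →
      (H.Adj a b ↔ ∃ p : G.Walk a b, ∀ x ∈ p.support, x ≠ a → x ≠ b → rank x < rank a))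
    (X : ι) (u : V)
    (hu : u ∈ subVerts parent bag X)
    (humax : ∀ v ∈ subVerts parent bag X, v ≠ u → rank v < rank u)
    -- `G_X` is connected
    (hconn : ∀ v ∈ subVerts parent bag X,
      ∃ p : G.Walk v u, ∀ x ∈ p.support, x ∈ subVerts parent bag X) :
    {w | w ∉ subVerts parent bag X ∧ ∃ v ∈ subVerts parent bag X, G.Adj v w}
      = {w | H.Adj u w ∧ rank u < rank w} :=
  stmt2_general G H parent bag root rank hroot hcover hsep hpost hH X u hu humax hconn
end

section
/- In a contraction hierarchy H, if u and w are both neighbors in H of a vertex v with rank(v) < rank(u) < rank(w), then (u, w) is an edge of H. -/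
namespace SimpleGraph.Walk

variable {V : Type*} {G : SimpleGraph V}

theorem forall_internal_support_append {a b c : V} {P : V → Prop}
    (p : G.Walk a b) (q : G.Walk b c) (hb : P b)
    (hp : ∀ x ∈ p.support, x ≠ a → x ≠ b → P x)
    (hq : ∀ x ∈ q.support, x ≠ b → x ≠ c → P x) :
    ∀ x ∈ (p.append q).support, x ≠ a → x ≠ c → P x := by
  intro x hx hxa hxc
  by_cases hxb : x = b
  · exact hxb ▸ hb
  rcases (mem_support_append_iff p q).mp hx with hx | hx
  · exact hp x hx hxa hxb
  · exact hq x hx hxb hxc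

end SimpleGraph.Walk

open SimpleGraph.Walk in
theorem stmt6_general {V : Type*} (G H : SimpleGraph V) (rank : V → ℕ)
    -- characterization of the contraction hierarchy `H` built from `G` by rank
    (hH : ∀ a b : V, rank a < rank b →
      (H.Adj a b ↔ ∃ p : G.Walk a b, ∀ x ∈ p.support, x ≠ a → x ≠ b → rank x < rank a))
    (v u w : V) (h1 : H.Adj v u) (h2 : H.Adj v w)
    (hvu : rank v < rank u) (huw : rank u < rank w) :
    H.Adj u w := by
  obtain ⟨p, hp⟩ := (hH v u hvu).mp h1
  obtain ⟨q, hq⟩ := (hH v w (hvu.trans huw)).mp h2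
  refine (hH u w huw).mpr ⟨p.reverse.append q, forall_internal_support_append _ _ hvu ?_ ?_⟩
  · intro x hx hxu hxv
    exact (hp x (List.mem_reverse.mp (support_reverse p ▸ hx)) hxv hxu).trans hvu
  · intro x hx hxv hxw
    exact (hq x hx hxv hxw).trans hvu

/-- In a contraction hierarchy `H`, if `u` and `w` are both
`H`-neighbors of a vertex `v` with `rank v < rank u < rank w`, then `(u, w)` is an
edge of `H`. -/
theorem stmt6 {V : Type*} (G H : SimpleGraph V) (rank : V → ℕ)
    (hrank : Function.Injective rank)
    -- characterization of the contraction hierarchy `H` built from `G` by rank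
    (hH : ∀ a b : V, rank a < rank b →
      (H.Adj a b ↔ ∃ p : G.Walk a b, ∀ x ∈ p.support, x ≠ a → x ≠ b → rank x < rank a))
    (v u w : V) (h1 : H.Adj v u) (h2 : H.Adj v w)
    (hvu : rank v < rank u) (huw : rank u < rank w) :
    H.Adj u w :=
  stmt6_general G H rank hH v u w h1 h2 hvu huw
end

section
/- The set of vertices scanned by an upward Dijkstra search in a contraction hierarchy H from a vertex v (relaxing only edges to higher-ranked vertices, assuming all edge weights are finite) equals the set of ancestors of v in the elimination tree of H, where the parent of v is its lowest-ranked higher neighbor in H. -/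
/-!
Every parent edge `(a, par a)` is an upward edge, so ancestors are upward-reachable.
Conversely it suffices to show that the head `b` of a single upward edge `(a, b)` is an
ancestor of `a`. If `b ≠ par a`, minimality of `par a` puts it strictly below `b`, and the
perfect elimination property makes `(par a, b)` an upward edge with a smaller rank gap;
induct on `rank b - rank a`.
-/

/-- Upward reachability in `H`: reachable along paths using only edges going from
lower to higher rank. -/
def upReach {V : Type*} (H : SimpleGraph V) (rank : V → ℕ) : V → V → Prop :=
  Relation.ReflTransGen (fun a b => H.Adj a b ∧ rank a < rank b)

namespace EliminationTree

variable {V : Type*} {H : SimpleGraph V} {rank : V → ℕ} {root : V} {par : V → V}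

theorem ne_root_of_rank_lt (hroot : ∀ v, v ≠ root → rank v < rank root) {a b : V}
    (hab : rank a < rank b) : a ≠ root := by
  rintro rfl
  have hb : b ≠ a := by rintro rfl; exact lt_irrefl _ hab
  exact lt_asymm hab (hroot b hb)

theorem adj_par_of_adj_of_rank_lt (hrank : Function.Injective rank)
    (hPEO : ∀ v a b : V, H.Adj v a → H.Adj v b → rank v < rank a → rank v < rank b →
      a ≠ b → H.Adj a b)
    {a b : V} (hpar_adj : H.Adj a (par a)) (hpar_lt : rank a < rank (par a))
    (hpar_min : ∀ w, H.Adj a w → rank a < rank w → rank (par a) ≤ rank w)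
    (hab : H.Adj a b) (hlt : rank a < rank b) (hb : b ≠ par a) :
    H.Adj (par a) b ∧ rank (par a) < rank b :=
  ⟨hPEO a (par a) b hpar_adj hab hpar_lt hlt (Ne.symm hb),
    (hpar_min b hab hlt).lt_of_ne fun h => hb (hrank h).symm⟩

theorem reflTransGen_par_of_adj_of_rank_lt (hrank : Function.Injective rank)
    (hPEO : ∀ v a b : V, H.Adj v a → H.Adj v b → rank v < rank a → rank v < rank b →
      a ≠ b → H.Adj a b)
    (hroot : ∀ v, v ≠ root → rank v < rank root)
    (hpar : ∀ v, v ≠ root → H.Adj v (par v) ∧ rank v < rank (par v) ∧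
      ∀ w, H.Adj v w → rank v < rank w → rank (par v) ≤ rank w)
    {a b : V} (hab : H.Adj a b) (hlt : rank a < rank b) :
    Relation.ReflTransGen (fun a b => a ≠ root ∧ b = par a) a b := by
  have ha := ne_root_of_rank_lt hroot hlt
  obtain ⟨hpar_adj, hpar_lt, hpar_min⟩ := hpar a ha
  by_cases hb : b = par a
  · exact .single ⟨ha, hb⟩
  · obtain ⟨hadj', hlt'⟩ :=
      adj_par_of_adj_of_rank_lt hrank hPEO hpar_adj hpar_lt hpar_min hab hlt hb
    exact .head ⟨ha, rfl⟩ (reflTransGen_par_of_adj_of_rank_lt hrank hPEO hroot hpar hadj' hlt')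
termination_by rank b - rank a

end EliminationTree

/-- The set of vertices scanned by an upward Dijkstra search in a
contraction hierarchy `H` from a vertex `v` (relaxing only edges to higher-ranked
vertices) equals the set of ancestors of `v` (including `v`) in the elimination tree
of `H`, where the parent of a non-root vertex is its lowest-ranked higher
`H`-neighbor. -/
theorem stmt7 {V : Type*} (H : SimpleGraph V) (rank : V → ℕ)
    (hrank : Function.Injective rank)
    -- the rank order is a perfect elimination ordering of `H`
    (hPEO : ∀ v a b : V, H.Adj v a → H.Adj v b → rank v < rank a → rank v < rank b →
      a ≠ b → H.Adj a b)
    (root : V) (hroot : ∀ v, v ≠ root → rank v < rank root)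
    (par : V → V)
    -- `par v` is the lowest-ranked higher `H`-neighbor of `v` (for `v ≠ root`)
    (hpar : ∀ v, v ≠ root → H.Adj v (par v) ∧ rank v < rank (par v) ∧
      ∀ w, H.Adj v w → rank v < rank w → rank (par v) ≤ rank w)
    (v : V) :
    {w | upReach H rank v w}
      = {w | Relation.ReflTransGen (fun a b => a ≠ root ∧ b = par a) v w} := by
  ext w
  constructor
  · exact Relation.reflTransGen_closed
      (fun a b h =>
        EliminationTree.reflTransGen_par_of_adj_of_rank_lt hrank hPEO hroot hpar h.1 h.2) v w
  · refine Relation.ReflTransGen.mono (fun a b hab => ?_) v w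
    obtain ⟨ha, rfl⟩ := hab
    exact ⟨(hpar a ha).1, (hpar a ha).2.1⟩
end

section
/- If the targets within each node of the k-nearest-neighbor tree exploration are examined in order of a valid lower bound and children are visited in ascending order of d(s, Y), then the reported k-th nearest distance is nonincreasing over the course of the algorithm, and once d(s, Y) for the next child exceeds the current k-th nearest distance, all remaining children (in the sorted order) can be skipped without losing correctness. -/
open scoped ENNReal

open Classical in
/-- The `k`-th smallest element of a multiset of distances (`∞` if there are fewer
than `k` elements): the least `r` such that at least `k` elements are `≤ r`. -/
noncomputable def kthBest (k : ℕ) (m : Multiset ℝ≥0∞) : ℝ≥0∞ :=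
  sInf {r | k ≤ Multiset.card (m.filter (fun x => x ≤ r))}

theorem kthBest_antitone (k : ℕ) : Antitone (kthBest k) := by
  classical
  intro m m' hm
  -- a larger multiset has at least as many elements `≤ r`, so more radii qualify
  refine sInf_le_sInf fun r hr => ?_
  exact le_trans hr (Multiset.card_le_card (Multiset.filter_le_filter _ hm))

/-- In the k-nearest-neighbor tree exploration, if the children
`Y 0, …, Y (d-1)` of a node are visited in ascending order of their valid lower
bounds `bound (Y i)`, then (1) the reported `k`-th nearest distance is nonincreasing
over the course of the algorithm (the multiset of examined target distances only
grows), and (2) once the lower bound of the next child `Y i₀` reaches the current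
`k`-th nearest distance, all remaining children in the sorted order can be skipped
without losing correctness: none of their targets is strictly closer than the final
`k`-th reported distance. -/
theorem stmt14 {V ι : Type*} (dist : V → ℝ≥0∞) (k d : ℕ) (Y : Fin d → ι)
    (sub : ι → Set V) (bound : ι → ℝ≥0∞)
    -- children sorted by ascending lower bound
    (hsorted : ∀ i j : Fin d, i ≤ j → bound (Y i) ≤ bound (Y j))
    -- valid lower bounds: `bound (Y i) ≤ min_{v ∈ V(G_{Y i})} dist v`
    (hlb : ∀ i : Fin d, ∀ v ∈ sub (Y i), bound (Y i) ≤ dist v)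
    -- `mcur`: distances of targets examined so far; `mfinal`: all examined distances
    (mcur mfinal : Multiset ℝ≥0∞) (hm : mcur ≤ mfinal)
    (i₀ : Fin d) (hstop : kthBest k mcur ≤ bound (Y i₀)) :
    kthBest k mfinal ≤ kthBest k mcur ∧
    ∀ j : Fin d, i₀ ≤ j → ∀ v ∈ sub (Y j), kthBest k mfinal ≤ dist v := by
  have hmono : kthBest k mfinal ≤ kthBest k mcur := kthBest_antitone k hm
  refine ⟨hmono, fun j hj v hv => ?_⟩
  calc kthBest k mfinal ≤ kthBest k mcur := hmono
    _ ≤ bound (Y i₀) := hstop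
    _ ≤ bound (Y j) := hsorted i₀ j hj
    _ ≤ dist v := hlb j v hv
end

section
/- In a contraction hierarchy H viewed as a chordal graph with perfect elimination ordering given by rank, the elimination tree ancestors of a vertex v are exactly N_H^↑(v) closed under the ancestor relation: formally, w is an ancestor of v in the elimination tree if and only if rank(w) > rank(v) and there is a path from v to w in H using only vertices of rank at most rank(w) — equivalently, v and w lie in a common connected component of the subgraph of H induced by vertices of rank ≤ rank(w). -/
/-!
Call `b` an ancestor of `a` when `b` is reached from `a` by iterating `par`. By the perfect
elimination property every higher-ranked neighbour `b` of `a` is an ancestor of `a`: either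
`b = par a`, or `par a` has rank below `rank b` and is adjacent to `b`, and we recurse.
Ancestors have higher rank, and since `par` is a function the ancestors of a vertex form a chain.
Now walk backwards from `w` along a path all of whose vertices have rank `≤ rank w`. Each vertex
`x` stepped to has `w` as an ancestor-or-self: if `x` is below its successor `u` on the path,
`u` is an ancestor of `x`; if above, `x` and `w` are both ancestors of `u`, hence comparable, and
`w` cannot lie strictly below `x` since `rank x ≤ rank w`.
-/

open SimpleGraph Relation

namespace EliminationTree

variable {V : Type*} {H : SimpleGraph V} {rank : V → ℕ} {r : V → V → Prop}

theorem rank_lt_of_transGen (hr : ∀ a b, r a b → rank a < rank b) {a b : V}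
    (hab : TransGen r a b) : rank a < rank b := by
  have hlt : TransGen (· < ·) (rank a) (rank b) := hab.lift rank hr
  rwa [transGen_eq_self] at hlt

theorem exists_walk_of_transGen (hr : ∀ a b, r a b → H.Adj a b ∧ rank a < rank b) {v w : V}
    (hvw : TransGen r v w) : ∃ p : H.Walk v w, ∀ x ∈ p.support, rank x ≤ rank w := by
  induction hvw with
  | single hvw =>
    obtain ⟨hadj, hlt⟩ := hr _ _ hvw
    exact ⟨hadj.toWalk, by simp [hlt.le]⟩
  | tail _ hbc ih =>
    obtain ⟨hadj, hlt⟩ := hr _ _ hbc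
    obtain ⟨p, hp⟩ := ih
    refine ⟨p.concat hadj, fun x hx => ?_⟩
    rw [Walk.support_concat, List.mem_append, List.mem_singleton] at hx
    rcases hx with hx | rfl
    · exact (hp x hx).trans hlt.le
    · exact le_rfl

theorem transGen_of_adj_of_rank_lt {root : V} {par : V → V}
    (hrank : Function.Injective rank)
    (hPEO : ∀ v a b : V, H.Adj v a → H.Adj v b → rank v < rank a → rank v < rank b →
      a ≠ b → H.Adj a b)
    (hroot : ∀ v, v ≠ root → rank v < rank root)
    (hpar : ∀ v, v ≠ root → H.Adj v (par v) ∧ rank v < rank (par v) ∧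
      ∀ w, H.Adj v w → rank v < rank w → rank (par v) ≤ rank w)
    {a b : V} (hab : H.Adj a b) (hlt : rank a < rank b) :
    TransGen (fun a b => a ≠ root ∧ b = par a) a b := by
  induction hd : rank b - rank a using Nat.strong_induction_on generalizing a with
  | _ n ih =>
  have ha : a ≠ root := by
    rintro rfl
    exact (hroot b hab.ne.symm).not_gt hlt
  obtain ⟨hadj, hpar_lt, hpar_min⟩ := hpar a ha
  by_cases hpb : par a = b
  · exact .single ⟨ha, hpb.symm⟩
  have hpb_lt : rank (par a) < rank b :=
    (hpar_min b hab hlt).lt_of_ne fun h => hpb (hrank h)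
  exact .head ⟨ha, rfl⟩
    (ih _ (by omega) (hPEO a _ _ hadj hab hpar_lt hlt hpb) hpb_lt rfl)

theorem reflTransGen_of_walk (hrank : Function.Injective rank)
    (hr_unique : Relator.RightUnique r) (hr_rank : ∀ a b, r a b → rank a < rank b)
    (hr_adj : ∀ a b, H.Adj a b → rank a < rank b → TransGen r a b) {v w : V}
    (p : H.Walk v w) (hp : ∀ x ∈ p.support, rank x ≤ rank w) : ReflTransGen r v w := by
  induction p with
  | nil => exact .refl
  | cons hxu q ih =>
    simp only [Walk.support_cons, List.forall_mem_cons] at hp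
    have huw := ih hp.2
    rcases lt_or_gt_of_ne (hrank.ne hxu.ne) with hlt | hgt
    · exact (hr_adj _ _ hxu hlt).to_reflTransGen.trans huw
    · have hux := (hr_adj _ _ hxu.symm hgt).to_reflTransGen
      rcases hux.total_of_right_unique hr_unique huw with hxw | hwx
      · exact hxw
      rcases reflTransGen_iff_eq_or_transGen.mp hwx with rfl | hwx
      · exact .refl
      · exact absurd (rank_lt_of_transGen hr_rank hwx) hp.1.not_gt

end EliminationTree

open EliminationTree in
theorem stmt16_general {V : Type*} (H : SimpleGraph V) (rank : V → ℕ)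
    (hrank : Function.Injective rank)
    -- the rank order is a perfect elimination ordering of `H`
    (hPEO : ∀ v a b : V, H.Adj v a → H.Adj v b → rank v < rank a → rank v < rank b →
      a ≠ b → H.Adj a b)
    (root : V) (hroot : ∀ v, v ≠ root → rank v < rank root)
    (par : V → V)
    -- `par v` is the lowest-ranked higher `H`-neighbor of `v` (for `v ≠ root`)
    (hpar : ∀ v, v ≠ root → H.Adj v (par v) ∧ rank v < rank (par v) ∧
      ∀ w, H.Adj v w → rank v < rank w → rank (par v) ≤ rank w)
    (v w : V) :
    Relation.TransGen (fun a b => a ≠ root ∧ b = par a) v w ↔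
      rank v < rank w ∧ ∃ p : H.Walk v w, ∀ x ∈ p.support, rank x ≤ rank w := by
  have hr_edge : ∀ a b, (a ≠ root ∧ b = par a) → H.Adj a b ∧ rank a < rank b := by
    rintro a _ ⟨ha, rfl⟩
    exact ⟨(hpar a ha).1, (hpar a ha).2.1⟩
  have hr_rank := fun a b h => (hr_edge a b h).2
  constructor
  · exact fun h => ⟨rank_lt_of_transGen hr_rank h, exists_walk_of_transGen hr_edge h⟩
  · rintro ⟨hlt, p, hp⟩
    have hvw := reflTransGen_of_walk hrank (fun _ _ _ hb hc => hb.2.trans hc.2.symm) hr_rank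
      (fun _ _ => transGen_of_adj_of_rank_lt hrank hPEO hroot hpar) p hp
    rcases reflTransGen_iff_eq_or_transGen.mp hvw with rfl | h
    · exact absurd hlt (lt_irrefl _)
    · exact h

/-- In a contraction hierarchy `H` viewed as a chordal graph whose
rank order is a perfect elimination ordering, `w` is a (proper) ancestor of `v` in
the elimination tree if and only if `rank w > rank v` and there is a path from `v`
to `w` in `H` using only vertices of rank at most `rank w` (equivalently, `v` and
`w` lie in a common connected component of the subgraph of `H` induced by vertices
of rank `≤ rank w`). -/
theorem stmt16 {V : Type*} (H : SimpleGraph V) (rank : V → ℕ)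
    (hrank : Function.Injective rank)
    (hconn : H.Connected)
    -- the rank order is a perfect elimination ordering of `H`
    (hPEO : ∀ v a b : V, H.Adj v a → H.Adj v b → rank v < rank a → rank v < rank b →
      a ≠ b → H.Adj a b)
    (root : V) (hroot : ∀ v, v ≠ root → rank v < rank root)
    (par : V → V)
    -- `par v` is the lowest-ranked higher `H`-neighbor of `v` (for `v ≠ root`)
    (hpar : ∀ v, v ≠ root → H.Adj v (par v) ∧ rank v < rank (par v) ∧
      ∀ w, H.Adj v w → rank v < rank w → rank (par v) ≤ rank w)
    (v w : V) :
    Relation.TransGen (fun a b => a ≠ root ∧ b = par a) v w ↔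
      rank v < rank w ∧ ∃ p : H.Walk v w, ∀ x ∈ p.support, rank x ≤ rank w :=
  stmt16_general H rank hrank hPEO root hroot par hpar v w
end

section
/- Let H be a contraction hierarchy of G and let X be a node of a separator decomposition of G with highest-ranked vertex u in G_X. Then every edge of H from a vertex of G_X to a vertex outside G_X has its outside endpoint in N_H^↑(u); i.e., the upward H-neighborhood of the top vertex of G_X dominates all H-edges leaving G_X. -/
lemma anc_trichotomy {ι : Type*} (parent : ι → ι) {W X Z : ι}
    (hXZ : anc parent X Z) (hWZ : anc parent W Z) :
    anc parent X W ∨ anc parent W X ∨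
      ∃ Y₁ Y₂, parent Y₁ = parent Y₂ ∧ Y₁ ≠ Y₂ ∧ anc parent X Y₁ ∧ anc parent W Y₂ := by
  induction hXZ using Relation.ReflTransGen.head_induction_on with
  | refl => exact Or.inr (Or.inl hWZ)
  | @head a c hac hcZ ih =>
    rcases ih with hcW | hWc | ⟨Y₁, Y₂, hpar, hne, hcY₁, hWY₂⟩
    · exact Or.inl (.head hac hcW)
    · rcases Relation.ReflTransGen.cases_tail hWc with rfl | ⟨Y, hWY, hYc⟩
      · exact Or.inl (.single hac)
      · by_cases haY : a = Y
        · exact Or.inr (Or.inl (haY ▸ hWY))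
        · exact Or.inr (Or.inr ⟨a, Y, hac.trans hYc.symm, haY, .refl, hWY⟩)
    · exact Or.inr (Or.inr ⟨Y₁, Y₂, hpar, hne, .head hac hcY₁, hWY₂⟩)

lemma rank_lt_of_adj_leaving_subVerts {V ι : Type*} {G : SimpleGraph V} {parent : ι → ι}
    {bag : ι → Set V} {root : ι} {rank : V → ℕ}
    (hroot : ∀ Z, anc parent Z root) (hcover : ∀ v : V, ∃ Z, v ∈ bag Z)
    (hsep : ∀ Z Y₁ Y₂, parent Y₁ = Z → parent Y₂ = Z → Y₁ ≠ Y₂ →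
      ∀ a ∈ subVerts parent bag Y₁, ∀ b ∈ subVerts parent bag Y₂, ¬ G.Adj a b)
    (hpost : ∀ X Z, anc parent X Z → X ≠ Z →
      ∀ v ∈ subVerts parent bag X, ∀ w ∈ bag Z, rank v < rank w)
    {X : ι} {x y v : V} (hx : x ∈ subVerts parent bag X) (hy : y ∉ subVerts parent bag X)
    (hxy : G.Adj x y) (hv : v ∈ subVerts parent bag X) : rank v < rank y := by
  obtain ⟨W, hyW⟩ := hcover y
  have hnWX : ¬ anc parent W X := fun h => hy ⟨W, h, hyW⟩
  rcases anc_trichotomy parent (hroot X) (hroot W) with hXW | hWX | ⟨Y₁, Y₂, hpar, hne, hXY₁, hWY₂⟩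
  · exact hpost X W hXW (by rintro rfl; exact hnWX .refl) v hv y hyW
  · exact absurd hWX hnWX
  · obtain ⟨Zx, hZx, hxZ⟩ := hx
    exact absurd hxy (hsep _ Y₁ Y₂ rfl hpar.symm hne x ⟨Zx, hZx.trans hXY₁, hxZ⟩ y ⟨W, hWY₂, hyW⟩)

lemma SimpleGraph.Walk.exists_walk_mem_and_lt_of_forall_le {V α : Type*} [Preorder α]
    {G : SimpleGraph V} {f : V → α} {S : Set V} {r : α}
    (hS : ∀ x y, x ∈ S → y ∉ S → G.Adj x y → r < f y)
    {s t : V} (q : G.Walk s t) (hs : s ∈ S) (ht : t ∉ S)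
    (hq : ∀ x ∈ q.support, x ≠ t → f x ≤ r) :
    ∃ q' : G.Walk s t, (∀ x ∈ q'.support, x ≠ t → x ∈ S) ∧ r < f t := by
  induction q with
  | nil => exact absurd hs ht
  | @cons s s' t hadj q ih =>
    by_cases hs' : s' ∈ S
    · obtain ⟨q', hq'S, hrt⟩ := ih hs' ht fun x hx => hq x (by simp [hx])
      refine ⟨.cons hadj q', fun x hx hxt => ?_, hrt⟩
      rcases List.mem_cons.mp hx with rfl | hx
      · exact hs
      · exact hq'S x hx hxt
    · have hrs' : r < f s' := hS s s' hs hs' hadj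
      obtain rfl : s' = t := by
        by_contra hne
        exact (hq s' (by simp) hne).not_gt hrs'
      refine ⟨.cons hadj .nil, fun x hx hxt => ?_, hrs'⟩
      rcases List.mem_cons.mp hx with rfl | hx
      · exact hs
      · exact absurd (by simpa using hx) hxt

lemma exists_walk_of_adj_hierarchy {V : Type*} {G H : SimpleGraph V} {rank : V → ℕ}
    (hrank : Function.Injective rank)
    (hH : ∀ a b : V, rank a < rank b →
      (H.Adj a b ↔ ∃ p : G.Walk a b, ∀ x ∈ p.support, x ≠ a → x ≠ b → rank x < rank a))
    {a b : V} (hab : H.Adj a b) :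
    ∃ p : G.Walk a b, ∀ x ∈ p.support, x ≠ a → x ≠ b → rank x < rank a ∧ rank x < rank b := by
  rcases lt_or_gt_of_ne (hrank.ne hab.ne) with hlt | hgt
  · obtain ⟨p, hp⟩ := (hH a b hlt).mp hab
    exact ⟨p, fun x hx hxa hxb => ⟨hp x hx hxa hxb, (hp x hx hxa hxb).trans hlt⟩⟩
  · obtain ⟨p, hp⟩ := (hH b a hgt).mp hab.symm
    refine ⟨p.reverse, fun x hx hxa hxb => ?_⟩
    have hx' : x ∈ p.support := by simpa using hx
    exact ⟨(hp x hx' hxb hxa).trans hgt, hp x hx' hxb hxa⟩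

theorem stmt19_general {V ι : Type*} (G H : SimpleGraph V) (parent : ι → ι) (bag : ι → Set V)
    (root : ι) (rank : V → ℕ) (hrank : Function.Injective rank)
    (hroot : ∀ Z, anc parent Z root)
    (hcover : ∀ v : V, ∃ Z, v ∈ bag Z)
    -- separator property: each node separates the subtrees of its distinct children
    (hsep : ∀ Z Y₁ Y₂, parent Y₁ = Z → parent Y₂ = Z → Y₁ ≠ Y₂ →
      ∀ a ∈ subVerts parent bag Y₁, ∀ b ∈ subVerts parent bag Y₂, ¬ G.Adj a b)
    -- postorder numbering property
    (hpost : ∀ X Z, anc parent X Z → X ≠ Z →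
      ∀ v ∈ subVerts parent bag X, ∀ w ∈ bag Z, rank v < rank w)
    -- characterization of the contraction hierarchy `H` built from `G` by rank
    (hH : ∀ a b : V, rank a < rank b →
      (H.Adj a b ↔ ∃ p : G.Walk a b, ∀ x ∈ p.support, x ≠ a → x ≠ b → rank x < rank a))
    (X : ι) (u : V)
    (hu : u ∈ subVerts parent bag X)
    (humax : ∀ v ∈ subVerts parent bag X, v ≠ u → rank v < rank u)
    -- `G_X` is connected
    (hconn : ∀ v ∈ subVerts parent bag X,
      ∃ p : G.Walk v u, ∀ x ∈ p.support, x ∈ subVerts parent bag X) :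
    ∀ a b : V, a ∈ subVerts parent bag X → b ∉ subVerts parent bag X → H.Adj a b →
      H.Adj u b ∧ rank u < rank b := by
  intro a b ha hb hab
  have hrank_le : ∀ v ∈ subVerts parent bag X, rank v ≤ rank u := fun v hv =>
    (eq_or_ne v u).elim (fun h => h ▸ le_rfl) fun h => (humax v hv h).le
  have hexit : ∀ x y, x ∈ subVerts parent bag X → y ∉ subVerts parent bag X → G.Adj x y →
      rank u < rank y := fun x y hx hy hxy =>
    rank_lt_of_adj_leaving_subVerts hroot hcover hsep hpost hx hy hxy hu
  obtain ⟨p, hp⟩ := exists_walk_of_adj_hierarchy hrank hH hab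
  obtain ⟨q, hqS, hub⟩ := p.exists_walk_mem_and_lt_of_forall_le hexit ha hb fun x hx hxb =>
    (eq_or_ne x a).elim (fun h => h ▸ hrank_le a ha)
      fun hxa => ((hp x hx hxa hxb).1.trans_le (hrank_le a ha)).le
  obtain ⟨w, hw⟩ := hconn a ha
  refine ⟨(hH u b hub).mpr ⟨w.reverse.append q, fun x hx hxu hxb => humax x ?_ hxu⟩, hub⟩
  rcases (SimpleGraph.Walk.mem_support_append_iff _ _).mp hx with hx | hx
  · exact hw x (by simpa using hx)
  · exact hqS x hx hxb

/-- Let `H` be a contraction hierarchy of `G` and `X` a node of a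
separator decomposition of `G` with highest-ranked vertex `u` in `G_X`.  Then every
edge of `H` from a vertex of `G_X` to a vertex outside `G_X` has its outside
endpoint in `N_H^↑(u)`: the upward `H`-neighborhood of the top vertex of `G_X`
dominates all `H`-edges leaving `G_X`. -/
theorem stmt19 {V ι : Type*} (G H : SimpleGraph V) (parent : ι → ι) (bag : ι → Set V)
    (root : ι) (rank : V → ℕ) (hrank : Function.Injective rank)
    (hroot : ∀ Z, anc parent Z root)
    (hantisymm : ∀ Y Z, anc parent Y Z → anc parent Z Y → Y = Z)
    (hdisj : ∀ Y Z, Y ≠ Z → Disjoint (bag Y) (bag Z))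
    (hcover : ∀ v : V, ∃ Z, v ∈ bag Z)
    -- separator property: each node separates the subtrees of its distinct children
    (hsep : ∀ Z Y₁ Y₂, parent Y₁ = Z → parent Y₂ = Z → Y₁ ≠ Y₂ →
      ∀ a ∈ subVerts parent bag Y₁, ∀ b ∈ subVerts parent bag Y₂, ¬ G.Adj a b)
    -- postorder numbering property
    (hpost : ∀ X Z, anc parent X Z → X ≠ Z →
      ∀ v ∈ subVerts parent bag X, ∀ w ∈ bag Z, rank v < rank w)
    -- characterization of the contraction hierarchy `H` built from `G` by rank
    (hH : ∀ a b : V, rank a < rank b →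
      (H.Adj a b ↔ ∃ p : G.Walk a b, ∀ x ∈ p.support, x ≠ a → x ≠ b → rank x < rank a))
    (X : ι) (u : V)
    (hu : u ∈ subVerts parent bag X)
    (humax : ∀ v ∈ subVerts parent bag X, v ≠ u → rank v < rank u)
    -- `G_X` is connected
    (hconn : ∀ v ∈ subVerts parent bag X,
      ∃ p : G.Walk v u, ∀ x ∈ p.support, x ∈ subVerts parent bag X) :
    ∀ a b : V, a ∈ subVerts parent bag X → b ∉ subVerts parent bag X → H.Adj a b →
      H.Adj u b ∧ rank u < rank b :=
  stmt19_general G H parent bag root rank hrank hroot hcover hsep hpost hH X u hu humax hconn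
end
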